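/- Let n = sm. Let f, g be polynomials with coefficients in F_{2^s}, with g permuting F_{2^n}. Suppose (H1) f is differentially δ_f-uniform as a function on F_{2^s}, (H2) g is differentially δ_g-uniform on F_{2^n}, and (H3) for every a ∈ F_{2^s} \ {0} and b ∈ F_{2^s} the equation g(x)+g(x+a)=b has no solution x ∈ F_{2^n} \ F_{2^s}. Then the piecewise function F (F(x)=f(x) on F_{2^s}, F(x)=g(x) off F_{2^s}) satisfies: for every b ∈ F_{2^n}, δ_F(a,b) ≤ max{δ_f, δ_g} for all a ∈ F_{2^s} \ {0}, and δ_F(a,b) ≤ δ_g + 2 for all a ∉ F_{2^s}. -/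

import Mathlib

/-!
Let `S = F_{2^s}`, an additive subgroup of `F` mapped into itself by `f`. For `a ∈ S`, a solution
`x ∈ S` of `F(x+a) + F(x) = b` forces `b ∈ S`, and by (H3) a solution `x ∉ S` forces `b ∉ S`; so
`δ_F(a,b)` is `δ_f(a,b)` or at most `δ_g(a,b)`. For `a ∉ S`, at most one of `x`, `x + a` lies in
`S`. Two solutions `x ≠ y` in `S` would give `g(x+a) + g(y+a) = f(x) + f(y) ∈ S` with
`x + y ∈ S \ {0}`, against (H3); the solutions with `x + a ∈ S` are the translates by `a` of those
in `S`. So all but at most two solutions are solutions of `g(x+a) + g(x) = b`.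
-/

/-- `delta f a b` is the number of `x` with `f (x + a) + f x = b`. -/
noncomputable def delta {F : Type*} [Field F] (f : F → F) (a b : F) : ℕ :=
  Nat.card {x : F // f (x + a) + f x = b}

/-- The differential uniformity of `f` (maximum of `delta f a b` over `a ≠ 0`, `b`). -/
noncomputable def diffUnif {F : Type*} [Field F] (f : F → F) : ℕ :=
  sSup {d : ℕ | ∃ a b : F, a ≠ 0 ∧ delta f a b = d}

/-- `deltaOn S f a b` is the number of `x ∈ S` with `f (x + a) + f x = b`. -/
noncomputable def deltaOn {F : Type*} [Field F] (S : Set F) (f : F → F) (a b : F) : ℕ :=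
  Nat.card {x : F // x ∈ S ∧ f (x + a) + f x = b}

/-- The differential uniformity of `f` as a function on `S` (sup over `a ∈ S \ {0}`, `b ∈ S`). -/
noncomputable def diffUnifOn {F : Type*} [Field F] (S : Set F) (f : F → F) : ℕ :=
  sSup {d : ℕ | ∃ a ∈ S, a ≠ 0 ∧ ∃ b ∈ S, deltaOn S f a b = d}

open Polynomial

theorem Polynomial.eval_mem_of_coeff_mem {R σ : Type*} [CommSemiring R] [SetLike σ R]
    [SubsemiringClass σ R] {K : σ} {p : R[X]} (hp : ∀ i, p.coeff i ∈ K) {x : R} (hx : x ∈ K) :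
    p.eval x ∈ K := by
  rw [eval_eq_sum_range]
  exact sum_mem fun i _ => mul_mem (hp i) (pow_mem hx i)

section DifferentialUniformity

variable {F : Type*} [Field F]

theorem delta_eq_ncard (f : F → F) (a b : F) :
    delta f a b = {x | f (x + a) + f x = b}.ncard :=
  Nat.card_coe_set_eq _

theorem delta_le_diffUnif [Finite F] (f : F → F) {a : F} (ha : a ≠ 0) (b : F) :
    delta f a b ≤ diffUnif f :=
  le_csSup ⟨Nat.card F, by rintro d ⟨a', b', -, rfl⟩; exact Finite.card_subtype_le _⟩
    ⟨a, b, ha, rfl⟩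

theorem deltaOn_le_diffUnifOn [Finite F] {S : Set F} (f : F → F) {a b : F} (haS : a ∈ S)
    (ha : a ≠ 0) (hbS : b ∈ S) : deltaOn S f a b ≤ diffUnifOn S f :=
  le_csSup ⟨Nat.card F, by rintro d ⟨a', -, -, b', -, rfl⟩; exact Finite.card_subtype_le _⟩
    ⟨a, haS, ha, b, hbS, rfl⟩

end DifferentialUniformity

section Piecewise

variable {F : Type*} [Field F] {S : AddSubgroup F} {f g Fn : F → F}

theorem delta_piecewise_eq_deltaOn (hFn1 : ∀ x ∈ S, Fn x = f x) (hFn2 : ∀ x ∉ S, Fn x = g x)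
    (hH3 : ∀ a ∈ S, a ≠ 0 → ∀ b ∈ S, ∀ x, x ∉ S → g x + g (x + a) ≠ b)
    {a b : F} (haS : a ∈ S) (ha : a ≠ 0) (hbS : b ∈ S) :
    delta Fn a b = deltaOn S f a b := by
  refine Nat.card_congr (Equiv.subtypeEquivRight fun x => ⟨fun hx => ?_, fun ⟨hxS, hx⟩ => ?_⟩)
  · by_cases hxS : x ∈ S
    · exact ⟨hxS, by rwa [hFn1 x hxS, hFn1 _ (add_mem hxS haS)] at hx⟩
    · have hxaS : x + a ∉ S := by rwa [add_mem_cancel_right haS]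
      rw [hFn2 x hxS, hFn2 _ hxaS, add_comm] at hx
      exact absurd hx (hH3 a haS ha b hbS x hxS)
  · rwa [hFn1 x hxS, hFn1 _ (add_mem hxS haS)]

theorem delta_piecewise_le_delta_of_notMem [Finite F] (hFn1 : ∀ x ∈ S, Fn x = f x)
    (hFn2 : ∀ x ∉ S, Fn x = g x) (hf : Set.MapsTo f S S) {a b : F} (haS : a ∈ S)
    (hbS : b ∉ S) :
    delta Fn a b ≤ delta g a b := by
  rw [delta_eq_ncard, delta_eq_ncard]
  refine Set.ncard_le_ncard (fun x (hx : Fn (x + a) + Fn x = b) => ?_)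
  have hxS : x ∉ S := fun hxS => hbS <| by
    rw [← hx, hFn1 x hxS, hFn1 _ (add_mem hxS haS)]
    exact add_mem (hf (add_mem hxS haS)) (hf hxS)
  have hxaS : x + a ∉ S := by rwa [add_mem_cancel_right haS]
  rwa [hFn2 x hxS, hFn2 _ hxaS] at hx

theorem subsingleton_setOf_mem_and_add_eq [CharP F 2] (hf : Set.MapsTo f S S)
    (hH3 : ∀ a ∈ S, a ≠ 0 → ∀ b ∈ S, ∀ x, x ∉ S → g x + g (x + a) ≠ b)
    {a : F} (haS : a ∉ S) (b : F) :
    {y | y ∈ S ∧ g (y + a) + f y = b}.Subsingleton := by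
  rintro y₁ ⟨hy₁S, hy₁⟩ y₂ ⟨hy₂S, hy₂⟩
  by_contra hne
  have hy₂aS : y₂ + a ∉ S := fun h => haS ((add_mem_cancel_left hy₂S).1 h)
  refine hH3 (y₁ - y₂) (sub_mem hy₁S hy₂S) (sub_ne_zero.2 hne) (f y₁ + f y₂)
    (add_mem (hf hy₁S) (hf hy₂S)) (y₂ + a) hy₂aS ?_
  rw [show y₂ + a + (y₁ - y₂) = y₁ + a by abel]
  linear_combination hy₁ + hy₂ + (b - f y₁ - f y₂) * CharTwo.two_eq_zero (R := F)

theorem delta_piecewise_le_delta_add_two [CharP F 2] [Finite F]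
    (hFn1 : ∀ x ∈ S, Fn x = f x) (hFn2 : ∀ x ∉ S, Fn x = g x) (hf : Set.MapsTo f S S)
    (hH3 : ∀ a ∈ S, a ≠ 0 → ∀ b ∈ S, ∀ x, x ∉ S → g x + g (x + a) ≠ b)
    {a : F} (haS : a ∉ S) (b : F) :
    delta Fn a b ≤ delta g a b + 2 := by
  set T := {y | y ∈ S ∧ g (y + a) + f y = b}
  have hT : T.ncard ≤ 1 :=
    Set.ncard_le_one_iff_subsingleton.2 (subsingleton_setOf_mem_and_add_eq hf hH3 haS b)
  have hcover : {x | Fn (x + a) + Fn x = b} ⊆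
      T ∪ (· + a) '' T ∪ {x | g (x + a) + g x = b} := by
    intro x (hx : Fn (x + a) + Fn x = b)
    by_cases hxS : x ∈ S
    · have hxaS : x + a ∉ S := fun h => haS ((add_mem_cancel_left hxS).1 h)
      rw [hFn1 x hxS, hFn2 _ hxaS] at hx
      exact Or.inl (Or.inl ⟨hxS, hx⟩)
    by_cases hxaS : x + a ∈ S
    · rw [hFn2 x hxS, hFn1 _ hxaS] at hx
      refine Or.inl (Or.inr ⟨x + a, ⟨hxaS, ?_⟩, CharTwo.add_cancel_right x a⟩)
      rwa [CharTwo.add_cancel_right, add_comm]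
    · rw [hFn2 x hxS, hFn2 _ hxaS] at hx
      exact Or.inr hx
  calc delta Fn a b ≤ (T ∪ (· + a) '' T ∪ {x | g (x + a) + g x = b}).ncard := by
        rw [delta_eq_ncard]; exact Set.ncard_le_ncard hcover
    _ ≤ T.ncard + ((· + a) '' T).ncard + delta g a b := by
        rw [delta_eq_ncard]
        exact (Set.ncard_union_le _ _).trans (add_le_add_left (Set.ncard_union_le _ _) _)
    _ ≤ delta g a b + 2 := by
        have := Set.ncard_image_le (f := (· + a)) (s := T) (Set.toFinite T)
        omega

end Piecewise

theorem stmt1_general {F : Type*} [Field F] [Fintype F] (n s : ℕ)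
    (hcard : Fintype.card F = 2 ^ n)
    (S : Set F) (hS : S = {x : F | x ^ (2 ^ s) = x})
    (f g : F → F) (p : Polynomial F)
    (hp : ∀ i, p.coeff i ∈ S)
    (hf : ∀ x, f x = p.eval x)
    (hH3 : ∀ a ∈ S, a ≠ 0 → ∀ b ∈ S, ∀ x, x ∉ S → g x + g (x + a) ≠ b)
    (Fn : F → F)
    (hFn1 : ∀ x ∈ S, Fn x = f x) (hFn2 : ∀ x ∉ S, Fn x = g x) :
    ∀ a b : F, a ≠ 0 →
      (a ∈ S → delta Fn a b ≤ max (diffUnifOn S f) (diffUnif g)) ∧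
      (a ∉ S → delta Fn a b ≤ diffUnif g + 2) := by
  have : CharP F 2 := charP_of_card_eq_prime_pow hcard
  obtain ⟨K, rfl⟩ : ∃ K : Subfield F, (K : Set F) = S :=
    ⟨(iterateFrobenius F 2 s).eqLocusField (RingHom.id F), by
      ext x; simp [hS, RingHom.mem_eqLocusField, iterateFrobenius_def]⟩
  have hfK : Set.MapsTo f K K := fun x hx => hf x ▸ p.eval_mem_of_coeff_mem hp hx
  intro a b ha
  refine ⟨fun haK => ?_, fun haK => ?_⟩
  · by_cases hbK : b ∈ K
    · rw [delta_piecewise_eq_deltaOn (S := K.toAddSubgroup) hFn1 hFn2 hH3 haK ha hbK]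
      exact (deltaOn_le_diffUnifOn f haK ha hbK).trans (le_max_left _ _)
    · calc delta Fn a b ≤ delta g a b :=
            delta_piecewise_le_delta_of_notMem (S := K.toAddSubgroup) hFn1 hFn2 hfK haK hbK
        _ ≤ _ := (delta_le_diffUnif g ha b).trans (le_max_right _ _)
  · calc delta Fn a b ≤ delta g a b + 2 :=
          delta_piecewise_le_delta_add_two (S := K.toAddSubgroup) hFn1 hFn2 hfK hH3 haK b
      _ ≤ _ := Nat.add_le_add_right (delta_le_diffUnif g ha b) 2

/-- Let `n = s·m`, `F = F_{2^n}` and `S = F_{2^s}`. Let `f, g` be induced by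
polynomials with coefficients in `S`, with `g` permuting `F` and satisfying (H3): for
`a ∈ S \ {0}` and `b ∈ S` the equation `g(x) + g(x+a) = b` has no solution outside `S`.
Here `f` is `δ_f`-uniform on `S` (with `δ_f = diffUnifOn S f`) and `g` is `δ_g`-uniform on `F`
(with `δ_g = diffUnif g`). Then the piecewise function `Fn` satisfies
`delta Fn a b ≤ max δ_f δ_g` for `a ∈ S \ {0}`, and `delta Fn a b ≤ δ_g + 2` for `a ∉ S`. -/
theorem stmt1 {F : Type*} [Field F] [Fintype F] (n s m : ℕ)
    (hn : n = s * m) (hcard : Fintype.card F = 2 ^ n)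
    (S : Set F) (hS : S = {x : F | x ^ (2 ^ s) = x})
    (f g : F → F) (p q : Polynomial F)
    (hp : ∀ i, p.coeff i ∈ S) (hq : ∀ i, q.coeff i ∈ S)
    (hf : ∀ x, f x = p.eval x) (hg : ∀ x, g x = q.eval x)
    (hgperm : Function.Bijective g)
    (hH3 : ∀ a ∈ S, a ≠ 0 → ∀ b ∈ S, ∀ x, x ∉ S → g x + g (x + a) ≠ b)
    (Fn : F → F)
    (hFn1 : ∀ x ∈ S, Fn x = f x) (hFn2 : ∀ x ∉ S, Fn x = g x) :
    ∀ a b : F, a ≠ 0 →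
      (a ∈ S → delta Fn a b ≤ max (diffUnifOn S f) (diffUnif g)) ∧
      (a ∉ S → delta Fn a b ≤ diffUnif g + 2) :=
  stmt1_general n s hcard S hS f g p hp hf hH3 Fn hFn1 hFn2
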